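/- Suppose the sequence {x^{(t)}}_{t≥0} follows Algorithm Class 1 on instance 𝒫 with x^{(0)} = 0. Write x^{(t)} in blocks x^{(t)} = (x₁^{(t)},…,x_m^{(t)}) with x_i^{(t)} ∈ ℝ^{d̄}. Then for every j̄ ∈ {2,3,…,d̄}, supp(x_i^{(t)}) ⊆ {1,…,j̄−1} for all i = 1,…,m and all t ≤ 1 + m·(j̄−2)/6. -/

import Mathlib

open Real Matrix Finset
open scoped Kronecker

noncomputable section

def Psi (u : ℝ) : ℝ := if u ≤ 0 then 0 else 1 - Real.exp (-u ^ 2)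
def Phi (v : ℝ) : ℝ := 4 * Real.arctan v + 2 * π
def zc {d : ℕ} (z : EuclideanSpace ℝ (Fin d)) (j : ℕ) : ℝ :=
  if h : 1 ≤ j ∧ j - 1 < d then z ⟨j - 1, h.2⟩ else 0
def phi {d : ℕ} (z : EuclideanSpace ℝ (Fin d)) (j : ℕ) : ℝ :=
  if j = 1 then -(Psi 1 * Phi (zc z 1))
  else Psi (-zc z (j - 1)) * Phi (-zc z j) - Psi (zc z (j - 1)) * Phi (zc z j)
def hfun (m i : ℕ) {d : ℕ} (z : EuclideanSpace ℝ (Fin d)) : ℝ :=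
  if i ≤ m / 3 then phi z 1 + 3 * ∑ j ∈ Finset.Icc 1 (d / 2), phi z (2 * j)
  else if i ≤ 2 * m / 3 then phi z 1
  else phi z 1 + 3 * ∑ j ∈ Finset.Icc 1 (d / 2), phi z (2 * j + 1)
def ff (m : ℕ) (Lf ε : ℝ) (i : ℕ) {d : ℕ} (z : EuclideanSpace ℝ (Fin d)) : ℝ :=
  300 * π * ε ^ 2 / (m * Lf) * hfun m i ((Real.sqrt m * Lf / (150 * π * ε)) • z)
def blkN {m d : ℕ} (x : EuclideanSpace ℝ (Fin m × Fin d)) (i : ℕ) :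
    EuclideanSpace ℝ (Fin d) :=
  WithLp.toLp 2 (fun j => if h : 1 ≤ i ∧ i - 1 < m then x (⟨i - 1, h.2⟩, j) else 0)
def f0 (m : ℕ) (Lf ε : ℝ) {d : ℕ} (x : EuclideanSpace ℝ (Fin m × Fin d)) : ℝ :=
  ∑ i ∈ Finset.Icc 1 m, ff m Lf ε i (blkN x i)
def l1norm {ι : Type*} [Fintype ι] (x : ι → ℝ) : ℝ := ∑ i, |x i|
def Jmat (p : ℕ) : Matrix (Fin (p - 1)) (Fin p) ℝ :=
  Matrix.of fun i j => if j.val = i.val then -1 else if j.val = i.val + 1 then 1 else 0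
def Hmat (m d : ℕ) (Lf : ℝ) : Matrix (Fin (m - 1) × Fin d) (Fin m × Fin d) ℝ :=
  ((m : ℝ) * Lf) • (Jmat m ⊗ₖ (1 : Matrix (Fin d) (Fin d) ℝ))
def Mset (m₁ m₂ : ℕ) : Finset ℕ := (Finset.Icc 1 (3 * m₂ - 1)).image (· * m₁)
def JM (m₁ m₂ : ℕ) : Matrix (Fin (3 * m₂ - 1)) (Fin (3 * m₁ * m₂)) ℝ :=
  Matrix.of fun i j =>
    if j.val + 1 = (i.val + 1) * m₁ then -1
    else if j.val = (i.val + 1) * m₁ then 1 else 0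
def Abar (m₁ m₂ d : ℕ) (Lf : ℝ) :
    Matrix (Fin (3 * m₂ - 1) × Fin d) (Fin (3 * m₁ * m₂) × Fin d) ℝ :=
  ((3 * m₁ * m₂ : ℕ) * Lf) • (JM m₁ m₂ ⊗ₖ (1 : Matrix (Fin d) (Fin d) ℝ))
abbrev MCidx (m₁ m₂ : ℕ) := {k : Fin (3 * m₁ * m₂ - 1) // k.val + 1 ∉ Mset m₁ m₂}
def JMC (m₁ m₂ : ℕ) : Matrix (MCidx m₁ m₂) (Fin (3 * m₁ * m₂)) ℝ :=
  Matrix.of fun k j => Jmat (3 * m₁ * m₂) k.val j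
def Amat (m₁ m₂ d : ℕ) (Lf : ℝ) :
    Matrix (MCidx m₁ m₂ × Fin d) (Fin (3 * m₁ * m₂) × Fin d) ℝ :=
  ((3 * m₁ * m₂ : ℕ) * Lf) • (JMC m₁ m₂ ⊗ₖ (1 : Matrix (Fin d) (Fin d) ℝ))
def mvec {ι κ : Type*} [Fintype κ] (M : Matrix ι κ ℝ) (x : EuclideanSpace ℝ κ) :
    EuclideanSpace ℝ ι :=
  WithLp.toLp 2 (fun i => ∑ j, M i j * x j)
def sNorm {ι κ : Type*} [Fintype ι] [Fintype κ] [DecidableEq κ] (M : Matrix ι κ ℝ) : ℝ :=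
  ‖LinearMap.toContinuousLinearMap (Matrix.toEuclideanLin M)‖
def lamMax {ι : Type*} [Fintype ι] [DecidableEq ι] (M : Matrix ι ι ℝ) : ℝ :=
  sSup (spectrum ℝ M)
def lamMinPos {ι : Type*} [Fintype ι] [DecidableEq ι] (M : Matrix ι ι ℝ) : ℝ :=
  sInf (spectrum ℝ M ∩ Set.Ioi 0)
def condNum {ι κ : Type*} [Fintype ι] [DecidableEq ι] [Fintype κ] (M : Matrix ι κ ℝ) : ℝ :=
  Real.sqrt (lamMax (M * Mᵀ) / lamMinPos (M * Mᵀ))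
def gfun (m₁ m₂ d : ℕ) (β : ℝ) (x : EuclideanSpace ℝ (Fin (3 * m₁ * m₂) × Fin d)) : ℝ :=
  β * ∑ i ∈ Mset m₁ m₂, l1norm (fun j => blkN x i j - blkN x (i + 1) j)
def gbar (m₁ m₂ d : ℕ) (Lf β : ℝ)
    (y : EuclideanSpace ℝ (Fin (3 * m₂ - 1) × Fin d)) : ℝ :=
  β / ((3 * m₁ * m₂ : ℕ) * Lf) * l1norm y
def IsProx {E : Type*} [NormedAddCommGroup E] [InnerProductSpace ℝ E]
    (η : ℝ) (ψ : E → ℝ) (x p : E) : Prop :=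
  ∀ y, ψ p + ‖p - x‖ ^ 2 / (2 * η) ≤ ψ y + ‖y - x‖ ^ 2 / (2 * η)
def subdiff {E : Type*} [NormedAddCommGroup E] [InnerProductSpace ℝ E]
    (ψ : E → ℝ) (x : E) : Set E :=
  {v | ∀ y, ψ x + (inner ℝ v (y - x) : ℝ) ≤ ψ y}
def suppSub {d : ℕ} (z : EuclideanSpace ℝ (Fin d)) (k : ℕ) : Prop :=
  ∀ j : Fin d, z j ≠ 0 → j.val + 1 ≤ k

/-- x is an ε̂-stationary point of instance 𝒫. -/
def IsStatP (m₁ m₂ d : ℕ) (Lf ε β εh : ℝ)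
    (x : EuclideanSpace ℝ (Fin (3 * m₁ * m₂) × Fin d)) : Prop :=
  ∃ γ : EuclideanSpace ℝ (MCidx m₁ m₂ × Fin d), ∃ ξ ∈ subdiff (gfun m₁ m₂ d β) x,
    ‖gradient (f0 (3 * m₁ * m₂) Lf ε) x + mvec (Amat m₁ m₂ d Lf)ᵀ γ + ξ‖ ≤ εh ∧
    ‖mvec (Amat m₁ m₂ d Lf) x‖ ≤ εh

/-- (x, y) is an ε̂-stationary point of the splitting reformulation (SP). -/
def IsStatSP (m₁ m₂ d : ℕ) (Lf ε β εh : ℝ)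
    (x : EuclideanSpace ℝ (Fin (3 * m₁ * m₂) × Fin d))
    (y : EuclideanSpace ℝ (Fin (3 * m₂ - 1) × Fin d)) : Prop :=
  ∃ z₁ : EuclideanSpace ℝ (Fin (3 * m₂ - 1) × Fin d),
    ∃ z₂ : EuclideanSpace ℝ (MCidx m₁ m₂ × Fin d),
      Metric.infDist 0 ((· - z₁) '' subdiff (gbar m₁ m₂ d Lf β) y) ≤ εh ∧
      ‖gradient (f0 (3 * m₁ * m₂) Lf ε) x + mvec (Abar m₁ m₂ d Lf)ᵀ z₁ +
        mvec (Amat m₁ m₂ d Lf)ᵀ z₂‖ ≤ εh ∧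
      ‖y - mvec (Abar m₁ m₂ d Lf) x‖ ≤ εh ∧ ‖mvec (Amat m₁ m₂ d Lf) x‖ ≤ εh

/-- The sequence X follows Algorithm Class 1 on instance 𝒫. -/
def FollowsAC1 (m₁ m₂ d : ℕ) (Lf ε β : ℝ)
    (X : ℕ → EuclideanSpace ℝ (Fin (3 * m₁ * m₂) × Fin d)) : Prop :=
  X 0 = 0 ∧ ∀ t, 1 ≤ t → ∃ η : ℝ, 0 < η ∧
    ∃ ξ ∈ Submodule.span ℝ (⋃ s ∈ Set.Iio t,
      ({X s, gradient (f0 (3 * m₁ * m₂) Lf ε) (X s),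
        mvec ((Amat m₁ m₂ d Lf)ᵀ * Amat m₁ m₂ d Lf) (X s)} :
          Set (EuclideanSpace ℝ (Fin (3 * m₁ * m₂) × Fin d)))),
      ∃ p, IsProx η (gfun m₁ m₂ d β) ξ p ∧
        X t ∈ Submodule.span ℝ ({ξ, p} : Set (EuclideanSpace ℝ (Fin (3 * m₁ * m₂) × Fin d)))

/-- The pair of sequences (X, Y) follows Algorithm Class 2 on the splitting
reformulation (SP) of instance 𝒫. -/
def FollowsAC2 (m₁ m₂ d : ℕ) (Lf ε β : ℝ)
    (X : ℕ → EuclideanSpace ℝ (Fin (3 * m₁ * m₂) × Fin d))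
    (Y : ℕ → EuclideanSpace ℝ (Fin (3 * m₂ - 1) × Fin d)) : Prop :=
  X 0 = 0 ∧ Y 0 = 0 ∧ ∀ t, 1 ≤ t →
    (X t ∈ Submodule.span ℝ (⋃ s ∈ Set.Iio t,
      ({X s, gradient (f0 (3 * m₁ * m₂) Lf ε) (X s),
        mvec ((Amat m₁ m₂ d Lf)ᵀ * Amat m₁ m₂ d Lf) (X s),
        mvec ((Abar m₁ m₂ d Lf)ᵀ * Abar m₁ m₂ d Lf) (X s),
        mvec (Abar m₁ m₂ d Lf)ᵀ (Y s)} :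
          Set (EuclideanSpace ℝ (Fin (3 * m₁ * m₂) × Fin d))))) ∧
    ∃ η : ℝ, 0 < η ∧
      ∃ ξ ∈ Submodule.span ℝ (⋃ s ∈ Set.Iio t,
        ({Y s, mvec (Abar m₁ m₂ d Lf * (Abar m₁ m₂ d Lf)ᵀ) (Y s),
          mvec (Abar m₁ m₂ d Lf) (X s)} :
            Set (EuclideanSpace ℝ (Fin (3 * m₂ - 1) × Fin d)))),
        ∃ p, IsProx η (gbar m₁ m₂ d Lf β) ξ p ∧
          Y t ∈ Submodule.span ℝ
            ({ξ, p} : Set (EuclideanSpace ℝ (Fin (3 * m₂ - 1) × Fin d)))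

def cst (m₁ e : ℕ) : ℕ := if m₁ ∣ e then 0 else 1
def Dev (m₁ m₂ i : ℕ) : ℕ := ∑ e ∈ Finset.Ico (m₁ * m₂) i, cst m₁ e
def Dod (m₁ m₂ i : ℕ) : ℕ := ∑ e ∈ Finset.Ico i (2 * (m₁ * m₂) + 1), cst m₁ e
def tau (m₁ m₂ i j : ℕ) : ℕ :=
  if j ≤ 1 then 1
  else 2 + (j - 2) * (m₂ * (m₁ - 1) + 1) + (if Even j then Dev m₁ m₂ i else Dod m₁ m₂ i)

lemma cst_le_one (m₁ e : ℕ) : cst m₁ e ≤ 1 := by unfold cst; split <;> omega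

lemma tau_one (m₁ m₂ i : ℕ) : tau m₁ m₂ i 1 = 1 := by simp [tau]

lemma tau_of_even {j : ℕ} (m₁ m₂ i : ℕ) (h2 : 2 ≤ j) (he : Even j) :
    tau m₁ m₂ i j = 2 + (j - 2) * (m₂ * (m₁ - 1) + 1) + Dev m₁ m₂ i := by
  unfold tau; rw [if_neg (show ¬ j ≤ 1 by omega), if_pos he]

lemma tau_of_odd {j : ℕ} (m₁ m₂ i : ℕ) (h2 : 2 ≤ j) (ho : ¬ Even j) :
    tau m₁ m₂ i j = 2 + (j - 2) * (m₂ * (m₁ - 1) + 1) + Dod m₁ m₂ i := by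
  unfold tau; rw [if_neg (show ¬ j ≤ 1 by omega), if_neg ho]

lemma Dev_mono (m₁ m₂ : ℕ) {i i' : ℕ} (h : i ≤ i') : Dev m₁ m₂ i ≤ Dev m₁ m₂ i' :=
  Finset.sum_le_sum_of_subset (Finset.Ico_subset_Ico le_rfl h)

lemma Dod_anti (m₁ m₂ : ℕ) {i i' : ℕ} (h : i ≤ i') : Dod m₁ m₂ i' ≤ Dod m₁ m₂ i :=
  Finset.sum_le_sum_of_subset (Finset.Ico_subset_Ico h le_rfl)

lemma Dev_step (m₁ m₂ i : ℕ) : Dev m₁ m₂ (i + 1) ≤ Dev m₁ m₂ i + cst m₁ i := by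
  rcases le_or_gt (m₁ * m₂) i with h | h
  · unfold Dev; rw [Finset.sum_Ico_succ_top h]
  · unfold Dev; rw [Finset.Ico_eq_empty (show ¬ (m₁*m₂) < i + 1 by omega)]
    simp

lemma Dod_step (m₁ m₂ i : ℕ) : Dod m₁ m₂ i ≤ Dod m₁ m₂ (i + 1) + cst m₁ i := by
  rcases lt_or_ge i (2 * (m₁ * m₂) + 1) with h | h
  · unfold Dod; rw [Finset.sum_eq_sum_Ico_succ_bot h]; omega
  · unfold Dod; rw [Finset.Ico_eq_empty (show ¬ i < 2*(m₁*m₂)+1 by omega)]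
    simp

lemma tau_step_right (m₁ m₂ i j : ℕ) : tau m₁ m₂ i j ≤ tau m₁ m₂ (i + 1) j + cst m₁ i := by
  rcases le_or_gt j 1 with hj | hj
  · unfold tau; rw [if_pos hj, if_pos hj]; omega
  · have h1 := Dev_mono m₁ m₂ (show i ≤ i + 1 by omega)
    have h2 := Dod_step m₁ m₂ i
    rcases Nat.even_or_odd j with he | ho
    · rw [tau_of_even m₁ m₂ i hj he, tau_of_even m₁ m₂ (i+1) hj he]; omega
    · rw [tau_of_odd m₁ m₂ i hj (Nat.not_even_iff_odd.mpr ho),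
        tau_of_odd m₁ m₂ (i+1) hj (Nat.not_even_iff_odd.mpr ho)]; omega

lemma tau_step_left (m₁ m₂ i j : ℕ) : tau m₁ m₂ (i + 1) j ≤ tau m₁ m₂ i j + cst m₁ i := by
  rcases le_or_gt j 1 with hj | hj
  · unfold tau; rw [if_pos hj, if_pos hj]; omega
  · have h1 := Dev_step m₁ m₂ i
    have h2 := Dod_anti m₁ m₂ (show i ≤ i + 1 by omega)
    rcases Nat.even_or_odd j with he | ho
    · rw [tau_of_even m₁ m₂ i hj he, tau_of_even m₁ m₂ (i+1) hj he]; omega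
    · rw [tau_of_odd m₁ m₂ i hj (Nat.not_even_iff_odd.mpr ho),
        tau_of_odd m₁ m₂ (i+1) hj (Nat.not_even_iff_odd.mpr ho)]; omega

lemma tau_eq_of_dvd (m₁ m₂ i j : ℕ) (h : m₁ ∣ i) : tau m₁ m₂ i j = tau m₁ m₂ (i + 1) j := by
  have h0 : cst m₁ i = 0 := by simp [cst, h]
  have := tau_step_right m₁ m₂ i j
  have := tau_step_left m₁ m₂ i j
  omega

lemma block_lb (m₁ c k : ℕ) :
    k * (m₁ - 1) ≤ ∑ e ∈ Finset.Ico (m₁ * c) (m₁ * (c + k)), cst m₁ e := by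
  induction k with
  | zero => simp
  | succ k ih =>
    have hsplit := Finset.sum_Ico_consecutive (cst m₁)
      (show m₁ * c ≤ m₁ * (c + k) from Nat.mul_le_mul le_rfl (by omega))
      (show m₁ * (c + k) ≤ m₁ * (c + (k+1)) from Nat.mul_le_mul le_rfl (by omega))
    have hblk : m₁ - 1 ≤ ∑ e ∈ Finset.Ico (m₁ * (c + k)) (m₁ * (c + (k+1))), cst m₁ e := by
      set q := c + k with hq
      have hqq : m₁ * (c + (k+1)) = m₁ * q + m₁ := by rw [hq]; ring
      rw [hqq]
      have hsub : Finset.Ico (m₁ * q + 1) (m₁ * q + m₁) ⊆ Finset.Ico (m₁ * q) (m₁ * q + m₁) :=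
        Finset.Ico_subset_Ico (by omega) le_rfl
      have hone : ∀ e ∈ Finset.Ico (m₁ * q + 1) (m₁ * q + m₁), cst m₁ e = 1 := by
        intro e he
        simp only [Finset.mem_Ico] at he
        have : ¬ m₁ ∣ e := by
          rintro ⟨s, rfl⟩
          have h1 : q < s := by nlinarith [he.1, he.2]
          have h2 : s < q + 1 := by nlinarith [he.1, he.2]
          omega
        simp [cst, this]
      calc m₁ - 1 = (Finset.Ico (m₁ * q + 1) (m₁ * q + m₁)).card := by
            rw [Nat.card_Ico]; omega
        _ = ∑ e ∈ Finset.Ico (m₁ * q + 1) (m₁ * q + m₁), cst m₁ e := by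
            rw [Finset.sum_congr rfl hone]; simp
        _ ≤ _ := Finset.sum_le_sum_of_subset hsub
    have : (k+1) * (m₁ - 1) = k * (m₁ - 1) + (m₁ - 1) := by ring
    omega

lemma Dod_lb (m₁ m₂ i : ℕ) (h : i ≤ m₁ * m₂) : m₂ * (m₁ - 1) ≤ Dod m₁ m₂ i := by
  have h1 := block_lb m₁ m₂ m₂
  have hr : m₁ * (m₂ + m₂) = 2 * (m₁ * m₂) := by ring
  have h2 : ∑ e ∈ Finset.Ico (m₁ * m₂) (m₁ * (m₂ + m₂)), cst m₁ e ≤ Dod m₁ m₂ (m₁ * m₂) :=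
    Finset.sum_le_sum_of_subset (Finset.Ico_subset_Ico le_rfl (by omega))
  have h3 := Dod_anti m₁ m₂ h
  omega

lemma Dev_lb (m₁ m₂ i : ℕ) (h : 2 * (m₁ * m₂) + 1 ≤ i) : m₂ * (m₁ - 1) ≤ Dev m₁ m₂ i := by
  have h1 := block_lb m₁ m₂ m₂
  have hr : m₁ * (m₂ + m₂) = 2 * (m₁ * m₂) := by ring
  have h2 : ∑ e ∈ Finset.Ico (m₁ * m₂) (m₁ * (m₂ + m₂)), cst m₁ e ≤ Dev m₁ m₂ i :=
    Finset.sum_le_sum_of_subset (Finset.Ico_subset_Ico le_rfl (by omega))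
  omega

lemma tau_ext_even (m₁ m₂ i j : ℕ) (hi : i ≤ m₁ * m₂) (hj2 : 2 ≤ j) (hje : Even j) :
    tau m₁ m₂ i j ≤ tau m₁ m₂ i (j - 1) + 1 := by
  have hdev : Dev m₁ m₂ i = 0 := by
    unfold Dev; rw [Finset.Ico_eq_empty (show ¬ m₁*m₂ < i by omega)]; rfl
  rw [tau_of_even m₁ m₂ i hj2 hje, hdev]
  rcases Nat.eq_or_lt_of_le hj2 with h2 | h4
  · rw [← h2]; simp [tau_one]
  · have hj1 : ¬ Even (j - 1) := by
      rcases hje with ⟨r, hr⟩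
      rintro ⟨s, hs⟩; omega
    rw [tau_of_odd m₁ m₂ i (by omega) hj1]
    have hlb := Dod_lb m₁ m₂ i hi
    have hmul : (j - 2) * (m₂ * (m₁ - 1) + 1)
        ≤ (j - 1 - 2) * (m₂ * (m₁ - 1) + 1) + (m₂ * (m₁ - 1) + 1) := by
      have h5 : j - 2 ≤ (j - 1 - 2) + 1 := by omega
      calc (j-2) * (m₂ * (m₁ - 1) + 1) ≤ ((j - 1 - 2) + 1) * (m₂ * (m₁ - 1) + 1) :=
            Nat.mul_le_mul_right _ h5
        _ = _ := by ring
    omega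

lemma tau_ext_odd (m₁ m₂ i j : ℕ) (hi : 2 * (m₁ * m₂) + 1 ≤ i) (hj2 : 3 ≤ j) (hje : ¬ Even j) :
    tau m₁ m₂ i j ≤ tau m₁ m₂ i (j - 1) + 1 := by
  have hdod : Dod m₁ m₂ i = 0 := by
    unfold Dod; rw [Finset.Ico_eq_empty (show ¬ i < 2*(m₁*m₂)+1 by omega)]; rfl
  have hj1 : Even (j - 1) := by
    rcases Nat.even_or_odd j with h | h
    · exact absurd h hje
    · rcases h with ⟨r, hr⟩; exact ⟨r, by omega⟩
  rw [tau_of_odd m₁ m₂ i (by omega) hje, hdod, tau_of_even m₁ m₂ i (by omega) hj1]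
  have hlb := Dev_lb m₁ m₂ i hi
  have hmul : (j - 2) * (m₂ * (m₁ - 1) + 1)
      ≤ (j - 1 - 2) * (m₂ * (m₁ - 1) + 1) + (m₂ * (m₁ - 1) + 1) := by
    have h5 : j - 2 ≤ (j - 1 - 2) + 1 := by omega
    calc (j-2) * (m₂ * (m₁ - 1) + 1) ≤ ((j - 1 - 2) + 1) * (m₂ * (m₁ - 1) + 1) :=
          Nat.mul_le_mul_right _ h5
      _ = _ := by ring
  omega

lemma tau_lb (m₁ m₂ i j : ℕ) (hj : 2 ≤ j) :
    2 + (j - 2) * (m₂ * (m₁ - 1) + 1) ≤ tau m₁ m₂ i j := by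
  rcases Nat.even_or_odd j with he | ho
  · rw [tau_of_even m₁ m₂ i hj he]; omega
  · rw [tau_of_odd m₁ m₂ i hj (Nat.not_even_iff_odd.mpr ho)]; omega

lemma tau_mono_j (m₁ m₂ i j j' : ℕ) (h2 : 2 ≤ j) (h : j ≤ j') :
    2 + (j - 2) * (m₂ * (m₁ - 1) + 1) ≤ tau m₁ m₂ i j' := by
  have := tau_lb m₁ m₂ i j' (by omega)
  have : (j-2) * (m₂ * (m₁ - 1) + 1) ≤ (j'-2) * (m₂ * (m₁ - 1) + 1) :=
    Nat.mul_le_mul_right _ (by omega)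
  omega


lemma Psi_zero : Psi 0 = 0 := by simp [Psi]

lemma Psi_abs_le (u : ℝ) : |Psi u| ≤ u ^ 2 := by
  unfold Psi; split
  · simpa using sq_nonneg u
  · next h =>
    have h1 : -u^2 + 1 ≤ Real.exp (-u^2) := Real.add_one_le_exp _
    have h2 : Real.exp (-u^2) ≤ 1 := Real.exp_le_one_iff.mpr (by nlinarith)
    rw [abs_of_nonneg (by linarith)]; linarith

lemma hasDerivAt_Psi_zero : HasDerivAt Psi 0 0 := by
  rw [hasDerivAt_iff_isLittleO]
  have he : (fun x' : ℝ => Psi x' - Psi 0 - (x' - 0) • (0:ℝ)) = fun x' => Psi x' := by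
    funext x'; simp [Psi_zero]
  rw [he]
  rw [Asymptotics.isLittleO_iff]
  intro c hc
  filter_upwards [eventually_abs_sub_lt (0:ℝ) hc] with x hx
  have := Psi_abs_le x
  have hx' : |x - 0| = |x| := by ring_nf
  rw [hx'] at hx
  calc ‖Psi x‖ ≤ x ^ 2 := this
    _ = |x| * |x| := by rw [abs_mul_abs_self]; ring
    _ ≤ c * ‖x - 0‖ := by
        rw [show (x - 0) = x by ring]
        exact mul_le_mul (le_of_lt hx) le_rfl (abs_nonneg x) (le_of_lt hc)


def Vsub (m₁ m₂ : ℕ) (m d : ℕ) (t : ℕ) : Submodule ℝ (EuclideanSpace ℝ (Fin m × Fin d)) where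
  carrier := {x | ∀ p : Fin m × Fin d, t < tau m₁ m₂ (p.1.val + 1) (p.2.val + 1) → x p = 0}
  add_mem' := by
    intro a b ha hb p hp
    show (a + b) p = 0
    rw [PiLp.add_apply, ha p hp, hb p hp, add_zero]
  zero_mem' := by intro p _; rfl
  smul_mem' := by
    intro c x hx p hp
    show (c • x) p = 0
    rw [PiLp.smul_apply, hx p hp, smul_zero]

lemma Vsub_mono (m₁ m₂ m d : ℕ) {s t : ℕ} (h : s ≤ t) : Vsub m₁ m₂ m d s ≤ Vsub m₁ m₂ m d t := by
  intro x hx p hp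
  exact hx p (by omega)

lemma mem_Vsub {m₁ m₂ m d t : ℕ} {x : EuclideanSpace ℝ (Fin m × Fin d)} :
    x ∈ Vsub m₁ m₂ m d t ↔
      ∀ p : Fin m × Fin d, t < tau m₁ m₂ (p.1.val + 1) (p.2.val + 1) → x p = 0 :=
  Iff.rfl

lemma Jmat_ne {p : ℕ} {k : Fin (p-1)} {j : Fin p} (h : Jmat p k j ≠ 0) :
    j.val = k.val ∨ j.val = k.val + 1 := by
  unfold Jmat at h
  simp only [Matrix.of_apply] at h
  split_ifs at h with h1 h2
  · left; exact h1
  · right; exact h2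
  · exact absurd rfl h

lemma Amat_ne {m₁ m₂ d : ℕ} {Lf : ℝ} {r : MCidx m₁ m₂ × Fin d}
    {q : Fin (3 * m₁ * m₂) × Fin d} (h : Amat m₁ m₂ d Lf r q ≠ 0) :
    (q.1.val = r.1.val.val ∨ q.1.val = r.1.val.val + 1) ∧ r.2 = q.2 := by
  unfold Amat at h
  rw [Matrix.smul_apply] at h
  have h2 : (JMC m₁ m₂ ⊗ₖ (1 : Matrix (Fin d) (Fin d) ℝ)) r q ≠ 0 := by
    intro h0; rw [h0] at h; simp at h
  rw [Matrix.kroneckerMap_apply] at h2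
  have h3 : JMC m₁ m₂ r.1 q.1 ≠ 0 := fun h0 => h2 (by rw [h0, zero_mul])
  have h4 : (1 : Matrix (Fin d) (Fin d) ℝ) r.2 q.2 ≠ 0 := fun h0 => h2 (by rw [h0, mul_zero])
  refine ⟨Jmat_ne h3, ?_⟩
  by_contra hne
  exact h4 (Matrix.one_apply_ne hne)

lemma AtA_mem {m₁ m₂ d : ℕ} {Lf : ℝ} {s : ℕ} {x : EuclideanSpace ℝ (Fin (3*m₁*m₂) × Fin d)}
    (hx : x ∈ Vsub m₁ m₂ (3*m₁*m₂) d s) :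
    mvec ((Amat m₁ m₂ d Lf)ᵀ * Amat m₁ m₂ d Lf) x ∈ Vsub m₁ m₂ (3*m₁*m₂) d (s+1) := by
  intro p hp
  show (∑ q, ((Amat m₁ m₂ d Lf)ᵀ * Amat m₁ m₂ d Lf) p q * x q) = 0
  apply Finset.sum_eq_zero
  intro q _
  rcases le_or_gt (tau m₁ m₂ (q.1.val + 1) (q.2.val + 1)) s with hq | hq
  · -- need to show the matrix entry is 0
    have hM : ((Amat m₁ m₂ d Lf)ᵀ * Amat m₁ m₂ d Lf) p q = 0 := by
      rw [Matrix.mul_apply]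
      apply Finset.sum_eq_zero
      intro r _
      rw [Matrix.transpose_apply]
      by_contra hne
      have hp' := Amat_ne (left_ne_zero_of_mul hne)
      have hq' := Amat_ne (right_ne_zero_of_mul hne)
      -- adjacency
      have hj : q.2 = p.2 := hq'.2.symm.trans hp'.2
      have hadj : q.1.val = p.1.val ∨ q.1.val = p.1.val + 1 ∨ p.1.val = q.1.val + 1 := by
        rcases hp'.1 with h1 | h1 <;> rcases hq'.1 with h2 | h2 <;> omega
      have hstep : tau m₁ m₂ (p.1.val + 1) (p.2.val + 1)
          ≤ tau m₁ m₂ (q.1.val + 1) (q.2.val + 1) + 1 := by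
        rw [hj]
        rcases hadj with h | h | h
        · rw [h]; omega
        · have := tau_step_right m₁ m₂ (p.1.val + 1) (p.2.val + 1)
          have := cst_le_one m₁ (p.1.val + 1)
          rw [h]
          omega
        · have := tau_step_left m₁ m₂ (q.1.val + 1) (p.2.val + 1)
          have := cst_le_one m₁ (q.1.val + 1)
          rw [h]
          omega
      omega
    rw [hM, zero_mul]
  · rw [hx q hq, mul_zero]

lemma eucl_norm_sq {ι : Type*} [Fintype ι] (v : EuclideanSpace ℝ ι) :
    ‖v‖ ^ 2 = ∑ i, (v i) ^ 2 := by
  rw [EuclideanSpace.norm_eq, Real.sq_sqrt (by positivity)]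
  simp [Real.norm_eq_abs, sq_abs]

lemma blkN_apply {m d : ℕ} (x : EuclideanSpace ℝ (Fin m × Fin d)) {i : ℕ}
    (h1 : 1 ≤ i) (h2 : i - 1 < m) (j : Fin d) : blkN x i j = x (⟨i - 1, h2⟩, j) := by
  unfold blkN; exact dif_pos ⟨h1, h2⟩

lemma Mset_prop {m₁ m₂ : ℕ} (hm₁ : 1 ≤ m₁) {i : ℕ} (hi : i ∈ Mset m₁ m₂) :
    1 ≤ i ∧ i + 1 ≤ 3 * m₁ * m₂ ∧ m₁ ∣ i := by
  unfold Mset at hi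
  rw [Finset.mem_image] at hi
  obtain ⟨k, hk, rfl⟩ := hi
  rw [Finset.mem_Icc] at hk
  refine ⟨by nlinarith [hk.1], ?_, ⟨k, mul_comm k m₁⟩⟩
  have : k * m₁ ≤ (3 * m₂ - 1) * m₁ := Nat.mul_le_mul_right _ hk.2
  have h1 : 1 ≤ 3 * m₂ := by omega
  have : (3 * m₂ - 1) * m₁ + m₁ = 3 * m₁ * m₂ := by
    have : (3 * m₂ - 1) * m₁ + m₁ = (3 * m₂ - 1 + 1) * m₁ := by ring
    rw [this]; rw [Nat.sub_add_cancel h1]; ring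
  omega

lemma prox_mem {m₁ m₂ d : ℕ} (hm₁ : 1 ≤ m₁) {β η : ℝ} (hβ : 0 ≤ β) (hη : 0 < η) {t : ℕ}
    {ξ p : EuclideanSpace ℝ (Fin (3*m₁*m₂) × Fin d)}
    (hξ : ξ ∈ Vsub m₁ m₂ (3*m₁*m₂) d t)
    (hprox : IsProx η (gfun m₁ m₂ d β) ξ p) :
    p ∈ Vsub m₁ m₂ (3*m₁*m₂) d t := by
  classical
  let q : EuclideanSpace ℝ (Fin (3 * m₁ * m₂) × Fin d) :=
    WithLp.toLp 2 (fun r => if tau m₁ m₂ (r.1.val + 1) (r.2.val + 1) ≤ t then p r else 0 :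
      Fin (3 * m₁ * m₂) × Fin d → ℝ)
  have hqr : ∀ r : Fin (3 * m₁ * m₂) × Fin d,
      q r = if tau m₁ m₂ (r.1.val + 1) (r.2.val + 1) ≤ t then p r else 0 := fun r => rfl
  -- step 1 : gfun q ≤ gfun p
  have hg : gfun m₁ m₂ d β q ≤ gfun m₁ m₂ d β p := by
    unfold gfun
    apply mul_le_mul_of_nonneg_left _ hβ
    apply Finset.sum_le_sum
    intro i hi
    obtain ⟨hi1, him, hdvd⟩ := Mset_prop hm₁ hi
    unfold l1norm
    apply Finset.sum_le_sum
    intro j _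
    have hv1 : i - 1 < 3 * m₁ * m₂ := by omega
    have hv2 : (i + 1) - 1 < 3 * m₁ * m₂ := by omega
    have e1 : i - 1 + 1 = i := by omega
    have e2 : (i + 1) - 1 + 1 = i + 1 := by omega
    have hq1 : blkN q i j = if tau m₁ m₂ i (j.val + 1) ≤ t then blkN p i j else 0 := by
      rw [blkN_apply q hi1 hv1 j, blkN_apply p hi1 hv1 j, hqr]
      simp only [e1]
    have hq2 : blkN q (i+1) j = if tau m₁ m₂ (i+1) (j.val + 1) ≤ t then blkN p (i+1) j else 0 := by
      rw [blkN_apply q (by omega) hv2 j, blkN_apply p (by omega) hv2 j, hqr]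
      simp only [e2]
    have htau : tau m₁ m₂ i (j.val + 1) = tau m₁ m₂ (i+1) (j.val + 1) :=
      tau_eq_of_dvd m₁ m₂ i (j.val+1) hdvd
    show |blkN q i j - blkN q (i + 1) j| ≤ |blkN p i j - blkN p (i + 1) j|
    rw [hq1, hq2, ← htau]
    by_cases hc : tau m₁ m₂ i (j.val + 1) ≤ t
    · rw [if_pos hc, if_pos hc]
    · rw [if_neg hc, if_neg hc]; simp
  -- step 2 : coordinatewise norms
  have hcoord : ∀ r : Fin (3 * m₁ * m₂) × Fin d, (q r - ξ r) ^ 2 ≤ (p r - ξ r) ^ 2 := by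
    intro r
    rw [hqr]
    by_cases hc : tau m₁ m₂ (r.1.val + 1) (r.2.val + 1) ≤ t
    · rw [if_pos hc]
    · rw [if_neg hc, hξ r (by omega)]
      simpa using sq_nonneg (p r)
  have hsq : ‖q - ξ‖ ^ 2 ≤ ‖p - ξ‖ ^ 2 := by
    rw [eucl_norm_sq, eucl_norm_sq]
    apply Finset.sum_le_sum
    intro r _
    rw [PiLp.sub_apply, PiLp.sub_apply]
    exact hcoord r
  -- step 3 : prox inequality forces equality
  have hpx := hprox q
  have h2η : (0:ℝ) < 2 * η := by linarith
  have hdiv : ‖p - ξ‖ ^ 2 / (2 * η) ≤ ‖q - ξ‖ ^ 2 / (2 * η) := by linarith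
  have hle : ‖p - ξ‖ ^ 2 ≤ ‖q - ξ‖ ^ 2 := by
    have h1 := (div_le_div_iff₀ h2η h2η).mp hdiv
    exact le_of_mul_le_mul_right h1 h2η
  have heq : ∑ r, ((p - ξ) r) ^ 2 = ∑ r, ((q - ξ) r) ^ 2 := by
    have h1 : ∑ r, ((q - ξ) r) ^ 2 ≤ ∑ r, ((p - ξ) r) ^ 2 := by
      apply Finset.sum_le_sum; intro r _
      rw [PiLp.sub_apply, PiLp.sub_apply]; exact hcoord r
    have h2 : ∑ r, ((p - ξ) r) ^ 2 ≤ ∑ r, ((q - ξ) r) ^ 2 := by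
      rw [← eucl_norm_sq, ← eucl_norm_sq]; exact hle
    linarith
  have hptwise : ∀ r : Fin (3 * m₁ * m₂) × Fin d, ((q - ξ) r) ^ 2 = ((p - ξ) r) ^ 2 := by
    have := (Finset.sum_eq_sum_iff_of_le (by
      intro r _; rw [PiLp.sub_apply, PiLp.sub_apply]; exact hcoord r)).mp heq.symm
    intro r; exact this r (Finset.mem_univ r)
  intro r hr
  have h0 : ξ r = 0 := hξ r hr
  have hq0 : q r = 0 := by rw [hqr, if_neg (by omega)]
  have := hptwise r
  rw [PiLp.sub_apply, PiLp.sub_apply, hq0, h0] at this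
  have : (p r - 0) ^ 2 = 0 := by rw [← this]; ring
  have := pow_eq_zero_iff (n := 2) (by norm_num) |>.mp this
  show p r = 0
  linarith [this]

----------------------------------------------------------------
lemma zc_add_smul {d : ℕ} (w : EuclideanSpace ℝ (Fin d)) (pj : Fin d) (t : ℝ) (r : ℕ) :
    zc (w + t • EuclideanSpace.single pj (1:ℝ)) r
      = zc w r + if r = pj.val + 1 then t else 0 := by
  unfold zc
  by_cases h : 1 ≤ r ∧ r - 1 < d
  · rw [dif_pos h, dif_pos h, PiLp.add_apply, PiLp.smul_apply, EuclideanSpace.single_apply]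
    have : ((⟨r - 1, h.2⟩ : Fin d) = pj) ↔ (r = pj.val + 1) := by
      rw [Fin.ext_iff]; simp; omega
    by_cases hc : r = pj.val + 1
    · rw [if_pos (this.mpr hc), if_pos hc]; simp
    · rw [if_neg (fun hh => hc (this.mp hh)), if_neg hc]; simp
  · rw [dif_neg h, dif_neg h]
    rw [if_neg (fun hc => h (by constructor <;> omega))]
    simp

lemma zc_smul {d : ℕ} (w : EuclideanSpace ℝ (Fin d)) (a : ℝ) (r : ℕ) :
    zc (a • w) r = a * zc w r := by
  unfold zc
  by_cases h : 1 ≤ r ∧ r - 1 < d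
  · rw [dif_pos h, dif_pos h, PiLp.smul_apply]; rfl
  · rw [dif_neg h, dif_neg h, mul_zero]

-- T1 : coordinate not involved, term constant
lemma phi_slice_const {d : ℕ} (w : EuclideanSpace ℝ (Fin d)) (pj : Fin d) (k : ℕ)
    (hk1 : k ≠ pj.val + 1) (hk2 : k ≠ pj.val + 2) :
    HasDerivAt (fun t : ℝ => phi (w + t • EuclideanSpace.single pj (1:ℝ)) k) 0 0 := by
  have he : (fun t : ℝ => phi (w + t • EuclideanSpace.single pj (1:ℝ)) k)
      = fun _ => phi w k := by
    funext t
    unfold phi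
    by_cases h1 : k = 1
    · rw [if_pos h1, if_pos h1, zc_add_smul, if_neg (by omega), add_zero]
    · rw [if_neg h1, if_neg h1, zc_add_smul, zc_add_smul,
        if_neg (by omega), if_neg (by omega), add_zero, add_zero]
  rw [he]
  exact hasDerivAt_const 0 (phi w k)

-- T2 : k = J, previous coordinate of w vanishes : term identically zero
lemma phi_slice_zero {d : ℕ} (w : EuclideanSpace ℝ (Fin d)) (pj : Fin d)
    (hJ : 1 ≤ pj.val) (hprev : zc w pj.val = 0) :
    HasDerivAt (fun t : ℝ => phi (w + t • EuclideanSpace.single pj (1:ℝ)) (pj.val + 1)) 0 0 := by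
  have he : (fun t : ℝ => phi (w + t • EuclideanSpace.single pj (1:ℝ)) (pj.val + 1))
      = fun _ => 0 := by
    funext t
    unfold phi
    rw [if_neg (by omega)]
    have h1 : pj.val + 1 - 1 = pj.val := by omega
    rw [h1, zc_add_smul, if_neg (by omega), add_zero, hprev]
    rw [neg_zero, Psi_zero]
    ring
  rw [he]
  exact hasDerivAt_const 0 0

-- T3 : k = J + 1, coordinate J of w vanishes
lemma phi_slice_next {d : ℕ} (w : EuclideanSpace ℝ (Fin d)) (pj : Fin d)
    (h0 : zc w (pj.val + 1) = 0) :
    HasDerivAt (fun t : ℝ => phi (w + t • EuclideanSpace.single pj (1:ℝ)) (pj.val + 2)) 0 0 := by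
  have he : (fun t : ℝ => phi (w + t • EuclideanSpace.single pj (1:ℝ)) (pj.val + 2))
      = fun t => Psi (-t) * Phi (-zc w (pj.val + 2)) - Psi t * Phi (zc w (pj.val + 2)) := by
    funext t
    unfold phi
    rw [if_neg (by omega)]
    have h1 : pj.val + 2 - 1 = pj.val + 1 := by omega
    rw [h1, zc_add_smul, zc_add_smul, if_pos rfl, if_neg (by omega), h0, zero_add, add_zero]
  rw [he]
  have hneg : HasDerivAt (fun t : ℝ => Psi (-t)) 0 0 := by
    have h2 : HasDerivAt (fun t : ℝ => -t) (-1) 0 := (hasDerivAt_id 0).neg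
    have hP : HasDerivAt Psi 0 (-(0:ℝ)) := by rw [neg_zero]; exact hasDerivAt_Psi_zero
    have h3 : HasDerivAt (fun t : ℝ => Psi (-t)) (0 * (-1)) 0 := hP.comp 0 h2
    simpa using h3
  have hpos : HasDerivAt (fun t : ℝ => Psi t) 0 0 := hasDerivAt_Psi_zero
  have := (hneg.mul_const (Phi (-zc w (pj.val + 2)))).fun_sub
    (hpos.mul_const (Phi (zc w (pj.val + 2))))
  simpa using this

lemma hasDerivAt_hfun_slice {d : ℕ} (m i0 : ℕ) (w : EuclideanSpace ℝ (Fin d)) (pj : Fin d)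
    (hJ : 1 ≤ pj.val)
    (h0 : zc w (pj.val + 1) = 0)
    (h1 : i0 ≤ m / 3 → Even (pj.val + 1) → zc w pj.val = 0)
    (h2 : 2 * m / 3 < i0 → ¬ Even (pj.val + 1) → zc w pj.val = 0) :
    HasDerivAt (fun t : ℝ => hfun m i0 (w + t • EuclideanSpace.single pj (1:ℝ))) 0 0 := by
  have hc1 : HasDerivAt (fun t : ℝ => phi (w + t • EuclideanSpace.single pj (1:ℝ)) 1) 0 0 :=
    phi_slice_const w pj 1 (by omega) (by omega)
  unfold hfun
  split_ifs with hA hB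
  · have hsum : HasDerivAt (fun t : ℝ => ∑ j ∈ Finset.Icc 1 (d / 2),
        phi (w + t • EuclideanSpace.single pj (1:ℝ)) (2 * j)) 0 0 := by
      have hterms : ∀ j ∈ Finset.Icc 1 (d/2),
          HasDerivAt (fun t : ℝ => phi (w + t • EuclideanSpace.single pj (1:ℝ)) (2 * j))
            ((fun _ : ℕ => (0:ℝ)) j) 0 := by
        intro j hj
        by_cases hk1 : 2 * j = pj.val + 1
        · have hJe : Even (pj.val + 1) := ⟨j, by omega⟩
          have := phi_slice_zero w pj hJ (h1 hA hJe)
          rw [← hk1] at this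
          exact this
        · by_cases hk2 : 2 * j = pj.val + 2
          · have := phi_slice_next w pj h0
            rw [← hk2] at this
            exact this
          · exact phi_slice_const w pj (2 * j) hk1 hk2
      have := HasDerivAt.fun_sum hterms
      simpa using this
    have := hc1.fun_add (hsum.const_mul 3)
    simpa using this
  · exact hc1
  · have hsum : HasDerivAt (fun t : ℝ => ∑ j ∈ Finset.Icc 1 (d / 2),
        phi (w + t • EuclideanSpace.single pj (1:ℝ)) (2 * j + 1)) 0 0 := by
      have hterms : ∀ j ∈ Finset.Icc 1 (d/2),
          HasDerivAt (fun t : ℝ => phi (w + t • EuclideanSpace.single pj (1:ℝ)) (2 * j + 1))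
            ((fun _ : ℕ => (0:ℝ)) j) 0 := by
        intro j hj
        rw [Finset.mem_Icc] at hj
        by_cases hk1 : 2 * j + 1 = pj.val + 1
        · have hJo : ¬ Even (pj.val + 1) := by
            rw [← hk1]
            simp [Nat.even_add_one, Nat.even_mul]
          have := phi_slice_zero w pj hJ (h2 (by omega) hJo)
          rw [← hk1] at this
          exact this
        · by_cases hk2 : 2 * j + 1 = pj.val + 2
          · have := phi_slice_next w pj h0
            rw [← hk2] at this
            exact this
          · exact phi_slice_const w pj (2 * j + 1) hk1 hk2
      have := HasDerivAt.fun_sum hterms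
      simpa using this
    have := hc1.fun_add (hsum.const_mul 3)
    simpa using this

lemma gradient_coord {ι : Type*} [Fintype ι] [DecidableEq ι]
    (f : EuclideanSpace ℝ ι → ℝ) (x : EuclideanSpace ℝ ι) (p : ι) :
    gradient f x p = fderiv ℝ f x (EuclideanSpace.single p (1:ℝ)) := by
  have h1 : gradient f x p
      = (inner ℝ (EuclideanSpace.single p (1:ℝ)) (gradient f x) : ℝ) := by
    rw [EuclideanSpace.inner_single_left]; simp
  rw [h1, real_inner_comm]
  unfold gradient
  rw [InnerProductSpace.toDual_symm_apply]

lemma blkN_add_smul {m d : ℕ} (x : EuclideanSpace ℝ (Fin m × Fin d))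
    (p : Fin m × Fin d) (t : ℝ) {i : ℕ} (h1 : 1 ≤ i) (h2 : i - 1 < m) :
    blkN (x + t • EuclideanSpace.single p (1:ℝ)) i
      = if i = p.1.val + 1 then blkN x i + t • EuclideanSpace.single p.2 (1:ℝ)
        else blkN x i := by
  by_cases hc : i = p.1.val + 1
  · rw [if_pos hc]
    ext j
    rw [show ((blkN x i + t • EuclideanSpace.single p.2 (1:ℝ)) j)
        = blkN x i j + t * (if j = p.2 then 1 else 0) from by
      rw [PiLp.add_apply, PiLp.smul_apply, EuclideanSpace.single_apply]; rfl]
    rw [blkN_apply _ h1 h2 j, blkN_apply _ h1 h2 j, PiLp.add_apply, PiLp.smul_apply,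
      EuclideanSpace.single_apply]
    have hfst : (⟨i - 1, h2⟩ : Fin m) = p.1 := by
      apply Fin.ext; simp; omega
    by_cases hj : j = p.2
    · rw [if_pos (by rw [Prod.ext_iff]; exact ⟨hfst, hj⟩), if_pos hj]
      rfl
    · rw [if_neg (by rw [Prod.ext_iff]; exact fun hh => hj hh.2), if_neg hj]
      rfl
  · rw [if_neg hc]
    ext j
    rw [blkN_apply _ h1 h2 j, blkN_apply _ h1 h2 j, PiLp.add_apply, PiLp.smul_apply,
      EuclideanSpace.single_apply]
    rw [if_neg (by
      rw [Prod.ext_iff]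
      rintro ⟨hh, -⟩
      rw [Fin.ext_iff] at hh
      simp at hh
      omega)]
    simp

lemma zc_blkN {m d : ℕ} (x : EuclideanSpace ℝ (Fin m × Fin d)) (p1 : Fin m) (r : ℕ)
    (hr1 : 1 ≤ r) (hr2 : r - 1 < d) :
    zc (blkN x (p1.val + 1)) r = x (p1, ⟨r - 1, hr2⟩) := by
  unfold zc
  rw [dif_pos ⟨hr1, hr2⟩]
  rw [blkN_apply x (by omega) (show p1.val + 1 - 1 < m by simp) _]
  have hind : ((⟨p1.val + 1 - 1, show p1.val + 1 - 1 < m by simp⟩ : Fin m) : Fin m) = p1 := by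
    apply Fin.ext; simp
  rw [hind]

lemma grad_mem {m₁ m₂ d : ℕ} {Lf ε : ℝ} {s : ℕ}
    {x : EuclideanSpace ℝ (Fin (3*m₁*m₂) × Fin d)}
    (hx : x ∈ Vsub m₁ m₂ (3*m₁*m₂) d s) :
    gradient (f0 (3*m₁*m₂) Lf ε) x ∈ Vsub m₁ m₂ (3*m₁*m₂) d (s+1) := by
  intro p hp
  show gradient (f0 (3*m₁*m₂) Lf ε) x p = 0
  rw [gradient_coord]
  by_cases hdiff : DifferentiableAt ℝ (f0 (3*m₁*m₂) Lf ε) x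
  case neg => rw [fderiv_zero_of_not_differentiableAt hdiff]; simp
  -- basic index facts
  have hJ2 : 1 ≤ p.2.val := by
    by_contra h
    have h0 : p.2.val = 0 := by omega
    rw [show p.2.val + 1 = 1 by omega, tau_one] at hp
    omega
  have hxp : x p = 0 := hx p (by omega)
  set E := EuclideanSpace.single p (1:ℝ) with hE
  set a : ℝ := Real.sqrt (3*m₁*m₂ : ℕ) * Lf / (150 * π * ε) with ha
  set w : EuclideanSpace ℝ (Fin d) := a • blkN x (p.1.val + 1) with hw
  -- KEY hypotheses
  have h0 : zc w (p.2.val + 1) = 0 := by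
    rw [hw, zc_smul, zc_blkN x p.1 (p.2.val + 1) (by omega) (by simpa using p.2.isLt)]
    have : (p.1, (⟨p.2.val + 1 - 1, by simpa using p.2.isLt⟩ : Fin d)) = p := by
      apply Prod.ext
      · rfl
      · apply Fin.ext; simp
    rw [this, hxp, mul_zero]
  have h1 : p.1.val + 1 ≤ (3*m₁*m₂) / 3 → Even (p.2.val + 1) → zc w p.2.val = 0 := by
    intro hA hEv
    have hmm : 3 * m₁ * m₂ = 3 * (m₁ * m₂) := by ring
    have hA' : p.1.val + 1 ≤ m₁ * m₂ := by omega
    have hext := tau_ext_even m₁ m₂ (p.1.val + 1) (p.2.val + 1) hA' (by omega) hEv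
    rw [show p.2.val + 1 - 1 = p.2.val from by omega] at hext
    have hcoord : x (p.1, ⟨p.2.val - 1, by omega⟩) = 0 := by
      apply hx
      show s < tau m₁ m₂ (p.1.val + 1) ((p.2.val - 1) + 1)
      rw [show (p.2.val - 1) + 1 = p.2.val from by omega]
      omega
    rw [hw, zc_smul, zc_blkN x p.1 p.2.val hJ2 (by omega), hcoord, mul_zero]
  have h2 : 2 * (3*m₁*m₂) / 3 < p.1.val + 1 → ¬ Even (p.2.val + 1) → zc w p.2.val = 0 := by
    intro hB hOd
    have hmm : 3 * m₁ * m₂ = 3 * (m₁ * m₂) := by ring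
    have hmm2 : 2 * (3 * m₁ * m₂) = 6 * (m₁ * m₂) := by ring
    have hB' : 2 * (m₁ * m₂) + 1 ≤ p.1.val + 1 := by omega
    have hJ3 : 3 ≤ p.2.val + 1 := by
      rcases Nat.eq_or_lt_of_le (show 2 ≤ p.2.val + 1 by omega) with h | h
      · exfalso; exact hOd (by rw [← h]; exact ⟨1, rfl⟩)
      · omega
    have hext := tau_ext_odd m₁ m₂ (p.1.val + 1) (p.2.val + 1) hB' hJ3 hOd
    rw [show p.2.val + 1 - 1 = p.2.val from by omega] at hext
    have hcoord : x (p.1, ⟨p.2.val - 1, by omega⟩) = 0 := by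
      apply hx
      show s < tau m₁ m₂ (p.1.val + 1) ((p.2.val - 1) + 1)
      rw [show (p.2.val - 1) + 1 = p.2.val from by omega]
      omega
    rw [hw, zc_smul, zc_blkN x p.1 p.2.val hJ2 (by omega), hcoord, mul_zero]
  have hkey := hasDerivAt_hfun_slice (3*m₁*m₂) (p.1.val + 1) w p.2 hJ2 h0 h1 h2
  -- slice equals fderiv applied to E
  have hline : HasDerivAt (fun t : ℝ => x + t • E) E 0 := by
    have h := ((hasDerivAt_id (0:ℝ)).smul_const E).const_add x
    simpa using h
  have hslice1 : HasDerivAt (fun t : ℝ => f0 (3*m₁*m₂) Lf ε (x + t • E))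
      (fderiv ℝ (f0 (3*m₁*m₂) Lf ε) x E) 0 := by
    have hF : HasFDerivAt (f0 (3*m₁*m₂) Lf ε) (fderiv ℝ (f0 (3*m₁*m₂) Lf ε) x)
        ((fun t : ℝ => x + t • E) 0) := by
      simpa using hdiff.hasFDerivAt
    exact hF.comp_hasDerivAt 0 hline
  -- explicit slice derivative
  have hslice2 : HasDerivAt (fun t : ℝ => f0 (3*m₁*m₂) Lf ε (x + t • E)) 0 0 := by
    have hrw : (fun t : ℝ => f0 (3*m₁*m₂) Lf ε (x + t • E))
        = fun t : ℝ => ∑ i ∈ Finset.Icc 1 (3*m₁*m₂), ff (3*m₁*m₂) Lf ε i (blkN (x + t • E) i) := by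
      funext t; rfl
    rw [hrw]
    have hterms : ∀ i ∈ Finset.Icc 1 (3*m₁*m₂),
        HasDerivAt (fun t : ℝ => ff (3*m₁*m₂) Lf ε i (blkN (x + t • E) i))
          ((fun _ : ℕ => (0:ℝ)) i) 0 := by
      intro i hi
      rw [Finset.mem_Icc] at hi
      have hv : i - 1 < 3*m₁*m₂ := by omega
      by_cases hc : i = p.1.val + 1
      · have hfe : (fun t : ℝ => ff (3*m₁*m₂) Lf ε i (blkN (x + t • E) i))
            = fun t : ℝ => 300 * π * ε ^ 2 / ((3*m₁*m₂ : ℕ) * Lf) *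
                hfun (3*m₁*m₂) i (w + (a * t) • EuclideanSpace.single p.2 (1:ℝ)) := by
          funext t
          rw [blkN_add_smul x p t hi.1 hv, if_pos hc]
          unfold ff
          congr 1
          rw [smul_add, smul_smul, hw, hc]
        rw [hfe]
        have hG : HasDerivAt (fun t : ℝ => a * t) a 0 := by
          simpa using (hasDerivAt_id (0:ℝ)).const_mul a
        have h00 : HasDerivAt
            (fun u : ℝ => hfun (3*m₁*m₂) (p.1.val + 1) (w + u • EuclideanSpace.single p.2 (1:ℝ)))
            0 ((fun t : ℝ => a * t) 0) := by
          simpa using hkey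
        have hFG := h00.comp 0 hG
        have := hFG.const_mul (300 * π * ε ^ 2 / ((3*m₁*m₂ : ℕ) * Lf))
        rw [hc]
        simpa [Function.comp] using this
      · have hfe : (fun t : ℝ => ff (3*m₁*m₂) Lf ε i (blkN (x + t • E) i))
            = fun _ : ℝ => ff (3*m₁*m₂) Lf ε i (blkN x i) := by
          funext t
          rw [blkN_add_smul x p t hi.1 hv, if_neg hc]
        rw [hfe]
        exact hasDerivAt_const 0 _
    have := HasDerivAt.fun_sum hterms
    simpa using this
  have := hslice1.unique hslice2
  exact this

/-- For any sequence following Algorithm Class 1 on instance 𝒫 started at 0: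
supp(x_i^{(t)}) ⊆ {1,…,j̄−1} for all blocks i and all t ≤ 1 + m(j̄−2)/6. -/
theorem stmt_13 (Lf ε : ℝ) (hLf : 0 < Lf) (hε0 : 0 < ε) (hε1 : ε < 1)
    (m₁ m₂ : ℕ) (hm₁ : 2 ≤ m₁) (hm₂ : 1 ≤ m₂) (heven : Even (m₁ * m₂))
    (d : ℕ) (hd : 5 ≤ d) (hodd : Odd d)
    (β : ℝ) (hβ : (50 * π + 1 + sNorm (Amat m₁ m₂ d Lf)) * Real.sqrt (3 * m₁ * m₂) * ε < β)
    (X : ℕ → EuclideanSpace ℝ (Fin (3 * m₁ * m₂) × Fin d))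
    (hX : FollowsAC1 m₁ m₂ d Lf ε β X)
    (jb : ℕ) (hjb2 : 2 ≤ jb) (hjbd : jb ≤ d)
    (t : ℕ) (ht : (t : ℝ) ≤ 1 + (3 * m₁ * m₂ : ℝ) * ((jb : ℝ) - 2) / 6)
    (i : ℕ) (hi1 : 1 ≤ i) (him : i ≤ 3 * m₁ * m₂) :
    suppSub (blkN (X t) i) (jb - 1) := by
  obtain ⟨hX0, hXstep⟩ := hX
  have h6 : 6 ≤ 3 * m₁ * m₂ := by
    calc 6 = 3 * 2 * 1 := rfl
    _ ≤ 3 * m₁ * m₂ := Nat.mul_le_mul (Nat.mul_le_mul le_rfl hm₁) hm₂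
  have hβ0 : (0:ℝ) ≤ β := by
    have h1 : (0:ℝ) < Real.sqrt (3 * m₁ * m₂) := by
      apply Real.sqrt_pos.mpr
      have h2 : (1:ℝ) ≤ (m₁ : ℝ) := by exact_mod_cast (by omega : 1 ≤ m₁)
      have h3 : (1:ℝ) ≤ (m₂ : ℝ) := by exact_mod_cast hm₂
      nlinarith
    have hπ := Real.pi_pos
    have hsn : (0:ℝ) ≤ sNorm (Amat m₁ m₂ d Lf) := by unfold sNorm; exact norm_nonneg _
    have h2 : (0:ℝ) < (50 * π + 1 + sNorm (Amat m₁ m₂ d Lf)) * Real.sqrt (3 * m₁ * m₂) * ε :=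
      mul_pos (mul_pos (by nlinarith) h1) hε0
    linarith
  -- the invariant
  have hinv : ∀ t', X t' ∈ Vsub m₁ m₂ (3*m₁*m₂) d t' := by
    intro t'
    induction t' using Nat.strong_induction_on with
    | _ t' ih =>
      rcases Nat.eq_zero_or_pos t' with rfl | ht1
      · rw [hX0]; exact (Vsub m₁ m₂ (3*m₁*m₂) d 0).zero_mem
      · obtain ⟨η, hη, ξ, hξspan, pp, hprox, hXt⟩ := hXstep t' ht1
        have hξ : ξ ∈ Vsub m₁ m₂ (3*m₁*m₂) d t' := by
          refine Submodule.span_le.mpr ?_ hξspan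
          intro v hv
          simp only [Set.mem_iUnion, Set.mem_insert_iff, Set.mem_singleton_iff,
            Set.mem_Iio] at hv
          obtain ⟨s, hs, hv⟩ := hv
          rcases hv with rfl | rfl | rfl
          · exact Vsub_mono m₁ m₂ (3*m₁*m₂) d (le_of_lt hs) (ih s hs)
          · exact Vsub_mono m₁ m₂ (3*m₁*m₂) d (by omega) (grad_mem (ih s hs))
          · exact Vsub_mono m₁ m₂ (3*m₁*m₂) d (by omega) (AtA_mem (ih s hs))
        have hpp : pp ∈ Vsub m₁ m₂ (3*m₁*m₂) d t' :=
          prox_mem (by omega) hβ0 hη hξ hprox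
        refine Submodule.span_le.mpr ?_ hXt
        intro v hv
        simp only [Set.mem_insert_iff, Set.mem_singleton_iff] at hv
        rcases hv with rfl | rfl
        · exact hξ
        · exact hpp
  -- conclusion
  intro j hj
  have hvalid : i - 1 < 3 * m₁ * m₂ := by omega
  rw [blkN_apply (X t) hi1 hvalid j] at hj
  have htau : tau m₁ m₂ i (j.val + 1) ≤ t := by
    by_contra hcon
    apply hj
    apply hinv t ((⟨i - 1, hvalid⟩ : Fin (3*m₁*m₂)), j)
    show t < tau m₁ m₂ ((i - 1) + 1) (j.val + 1)
    rw [show i - 1 + 1 = i by omega]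
    omega
  rcases Nat.lt_or_ge (j.val + 1) 2 with hJ1 | hJ2
  · omega
  · by_contra hcon
    have hJge : jb ≤ j.val + 1 := by omega
    obtain ⟨u, hu⟩ : ∃ u, j.val + 1 = u + 2 := ⟨j.val + 1 - 2, by omega⟩
    obtain ⟨v, hv⟩ : ∃ v, m₁ = v + 1 := ⟨m₁ - 1, by omega⟩
    obtain ⟨q, hq⟩ : ∃ q, jb = q + 2 := ⟨jb - 2, by omega⟩
    have hnat : 2 + u * (m₂ * v + 1) ≤ t := by
      have h1 := tau_lb m₁ m₂ i (j.val + 1) hJ2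
      rw [show j.val + 1 - 2 = u from by omega, show m₁ - 1 = v from by omega] at h1
      exact le_trans h1 htau
    have hreal : (2:ℝ) + (u:ℝ) * ((m₂:ℝ) * (v:ℝ) + 1) ≤ (t:ℝ) := by
      exact_mod_cast hnat
    have hqu : (q:ℝ) ≤ (u:ℝ) := by exact_mod_cast (by omega : q ≤ u)
    have hv1 : (1:ℝ) ≤ (v:ℝ) := by exact_mod_cast (by omega : 1 ≤ v)
    have hm₂1 : (1:ℝ) ≤ (m₂:ℝ) := by exact_mod_cast hm₂
    have hjbr : ((jb:ℝ) - 2) = (q:ℝ) := by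
      rw [hq]; push_cast; ring
    have hm₁r : (m₁:ℝ) = (v:ℝ) + 1 := by rw [hv]; push_cast; ring
    rw [hjbr, hm₁r] at ht
    have hq0 : (0:ℝ) ≤ (q:ℝ) := Nat.cast_nonneg _
    have hm₂0 : (0:ℝ) ≤ (m₂:ℝ) := Nat.cast_nonneg _
    have key1 : (q:ℝ) * ((m₂:ℝ) * (v:ℝ) + 1) ≤ (u:ℝ) * ((m₂:ℝ) * (v:ℝ) + 1) := by
      apply mul_le_mul_of_nonneg_right hqu
      positivity
    have key2 : (q:ℝ) * (m₂:ℝ) ≤ (q:ℝ) * (m₂:ℝ) * (v:ℝ) := by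
      have hqm : (0:ℝ) ≤ (q:ℝ) * (m₂:ℝ) := by positivity
      calc (q:ℝ) * (m₂:ℝ) = (q:ℝ) * (m₂:ℝ) * 1 := by ring
        _ ≤ (q:ℝ) * (m₂:ℝ) * (v:ℝ) := mul_le_mul_of_nonneg_left hv1 hqm
    linarith [key1, key2, hreal, ht]


end
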